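/- Let V be a finite-dimensional real vector space with a positive compatible pair (Ω, j). Let T : V × V → V be a bilinear map with T(X,Y) = −T(Y,X) and T(jX,Y) = −j(T(X,Y)), and let A : V → (V → V) be bilinear (A(X) linear in X, A(X)(Y) linear in Y) such that 2Ω(A(X)(Y), Z) = Ω(T(Y,Z), jX) for all X, Y, Z. If T(Y, A(X)(Y)) = 0 for all X, Y ∈ V, then A = 0 and T = 0. -/
import Mathlib


/-- Let `(V, Ω, j)` be a finite-dimensional real vector space with a
positive compatible pair.  Let `T` be bilinear with `T X Y = -T Y X` and
`T (j X) Y = -j (T X Y)`, and let `A` be bilinear with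
`2 Ω (A X Y) Z = Ω (T Y Z) (j X)` for all `X, Y, Z`.
If `T Y (A X Y) = 0` for all `X, Y`, then `A = 0` and `T = 0`.
(This is the pointwise algebraic content of `∇ N^J = 0 ⟹ N^J = 0`.) -/
theorem stmt_6 (V : Type*) [AddCommGroup V] [Module ℝ V] [FiniteDimensional ℝ V]
    (Ω : V →ₗ[ℝ] V →ₗ[ℝ] ℝ) (j : V →ₗ[ℝ] V)
    (hΩalt : ∀ X : V, Ω X X = 0)
    (hΩnondeg : ∀ X : V, (∀ Y : V, Ω X Y = 0) → X = 0)
    (hj2 : ∀ X : V, j (j X) = -X)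
    (hcompat : ∀ X Y : V, Ω (j X) (j Y) = Ω X Y)
    (hpos : ∀ X : V, X ≠ 0 → 0 < Ω X (j X))
    (T : V →ₗ[ℝ] V →ₗ[ℝ] V)
    (hskew : ∀ X Y : V, T X Y = - T Y X)
    (hTj : ∀ X Y : V, T (j X) Y = - j (T X Y))
    (A : V →ₗ[ℝ] V →ₗ[ℝ] V)
    (hAT : ∀ X Y Z : V, 2 * Ω (A X Y) Z = Ω (T Y Z) (j X))
    (hTA : ∀ X Y : V, T Y (A X Y) = 0) :
    A = 0 ∧ T = 0 := by
  -- orthogonality of A-images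
  have key : ∀ X X' Y : V, Ω (A X Y) (A X' Y) = 0 := by
    intro X X' Y
    have h := hAT X Y (A X' Y)
    rw [hTA X' Y] at h
    simp at h
    linarith
  -- Ω (j U) Z = - Ω U (j Z)
  have hjω : ∀ U Z : V, Ω (j U) Z = - Ω U (j Z) := by
    intro U Z
    have : Ω (j U) Z = Ω (j U) (-(j (j Z))) := by rw [hj2]; simp
    rw [this]
    simp [hcompat]
  -- A (j X) Y = - j (A X Y)
  have hAj : ∀ X Y : V, A (j X) Y = - j (A X Y) := by
    intro X Y
    have h : ∀ Z : V, Ω (A (j X) Y + j (A X Y)) Z = 0 := by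
      intro Z
      have h1 : 2 * Ω (A (j X) Y) Z = - Ω (T Y Z) X := by
        rw [hAT, hj2]; simp
      have h2 : 2 * Ω (j (A X Y)) Z = Ω (T Y Z) X := by
        have e1 : Ω (j (A X Y)) Z = - Ω (A X Y) (j Z) := hjω _ _
        have e2 := hAT X Y (j Z)
        have e3 : T Y (j Z) = - j (T Y Z) := by
          rw [hskew Y (j Z), hTj]
          rw [hskew Z Y]
          simp
        rw [e3] at e2
        simp [hjω] at e2
        rw [hj2] at e2
        simp at e2
        rw [e1]
        linarith
      have := map_add Ω (A (j X) Y) (j (A X Y))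
      have e : Ω (A (j X) Y + j (A X Y)) Z
          = Ω (A (j X) Y) Z + Ω (j (A X Y)) Z := by
        rw [this]; simp
      rw [e]; linarith
    have h0 := hΩnondeg _ h
    have : A (j X) Y = - j (A X Y) := by
      have := add_eq_zero_iff_eq_neg.mp h0
      exact this
    exact this
  -- A = 0 pointwise
  have hA0 : ∀ X Y : V, A X Y = 0 := by
    intro X Y
    by_contra hne
    have hk := key X (j X) Y
    rw [hAj] at hk
    simp at hk
    have := hpos (A X Y) hne
    linarith
  -- T = 0 pointwise
  have hT0 : ∀ Y Z : V, T Y Z = 0 := by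
    intro Y Z
    apply hΩnondeg
    intro W
    have h := hAT (-(j W)) Y Z
    rw [hA0] at h
    simp at h
    rw [hj2] at h
    simpa using h
  constructor
  · ext X Y; simp [hA0]
  · ext X Y; simp [hT0]
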